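/- For every integer n ≥ 1, with [n] = (qⁿ − q⁻ⁿ)/(q − q⁻¹), the following hold in Ω¹: aⁿ·e_a = qⁿ e_a aⁿ + q^{n−1}[n]μ e_c a^{n−1}c + qμ²[n] e_d aⁿ; bⁿ·e_a = qⁿ e_a bⁿ + q^{n−1}[n]μ e_c b^{n−1}d + qμ²[n] e_d bⁿ; cⁿ·e_a = q⁻ⁿ e_a cⁿ + q^{1−n}[n]μ e_b c^{n−1}a; dⁿ·e_a = q⁻ⁿ e_a dⁿ + q^{1−n}[n]μ e_b d^{n−1}b; aⁿ·e_b = e_b aⁿ + qμ[n] e_d a^{n−1}c; bⁿ·e_b = e_b bⁿ + qμ[n] e_d b^{n−1}d; cⁿ·e_b = e_b cⁿ; dⁿ·e_b = e_b dⁿ; aⁿ·e_c = e_c aⁿ; bⁿ·e_c = e_c bⁿ; cⁿ·e_c = e_c cⁿ + qμ[n] e_d c^{n−1}a; dⁿ·e_c = e_c dⁿ + qμ[n] e_d d^{n−1}b; aⁿ·e_d = q⁻ⁿ e_d aⁿ; bⁿ·e_d = q⁻ⁿ e_d bⁿ; cⁿ·e_d = qⁿ e_d cⁿ; dⁿ·e_d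 = qⁿ e_d dⁿ. -/

import Mathlib

set_option maxHeartbeats 1600000

noncomputable section

open MulOpposite

structure Ctx where
  q : ℂ
  hq : IsPrimitiveRoot q 3
  A : Type
  [ringA : Ring A]
  [algA : Algebra ℂ A]
  a : A
  b : A
  c : A
  d : A
  rel_ba : b * a = q • (a * b)
  rel_ca : c * a = q • (a * c)
  rel_db : d * b = q • (b * d)
  rel_dc : d * c = q • (c * d)
  rel_cb : c * b = b * c
  rel_da : d * a - a * d = (q * (1 - (q ^ 2)⁻¹)) • (b * c)
  rel_ad : a * d - q⁻¹ • (b * c) = 1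
  rel_b3 : b ^ 3 = 0
  rel_c3 : c ^ 3 = 0
  rel_a3 : a ^ 3 = 1
  rel_d3 : d ^ 3 = 1
  basA : Module.Basis (Fin 3 × Fin 3 × Fin 3) ℂ A
  basA_eq : ∀ i : Fin 3 × Fin 3 × Fin 3,
    basA i = a ^ (i.1 : ℕ) * b ^ (i.2.1 : ℕ) * c ^ (i.2.2 : ℕ)
  Om1 : Type
  [agOm : AddCommGroup Om1]
  [mC : Module ℂ Om1]
  [mL : Module A Om1]
  [mR : Module Aᵐᵒᵖ Om1]
  [scLR : SMulCommClass A Aᵐᵒᵖ Om1]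
  [tL : IsScalarTower ℂ A Om1]
  [tR : IsScalarTower ℂ Aᵐᵒᵖ Om1]
  basOm : Module.Basis (Fin 4) Aᵐᵒᵖ Om1
  bm_c_eb : c • basOm 1 = op c • basOm 1
  bm_d_eb : d • basOm 1 = op d • basOm 1
  bm_c_ed : c • basOm 3 = q • (op c • basOm 3)
  bm_d_ed : d • basOm 3 = q • (op d • basOm 3)
  bm_a_ec : a • basOm 2 = op a • basOm 2
  bm_b_ec : b • basOm 2 = op b • basOm 2
  bm_a_ed : a • basOm 3 = q⁻¹ • (op a • basOm 3)
  bm_b_ed : b • basOm 3 = q⁻¹ • (op b • basOm 3)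
  bm_a_eb : a • basOm 1 = op a • basOm 1 + (q * (1 - (q ^ 2)⁻¹)) • (op c • basOm 3)
  bm_b_eb : b • basOm 1 = op b • basOm 1 + (q * (1 - (q ^ 2)⁻¹)) • (op d • basOm 3)
  bm_c_ec : c • basOm 2 = op c • basOm 2 + (q * (1 - (q ^ 2)⁻¹)) • (op a • basOm 3)
  bm_d_ec : d • basOm 2 = op d • basOm 2 + (q * (1 - (q ^ 2)⁻¹)) • (op b • basOm 3)
  bm_c_ea : c • basOm 0 = q⁻¹ • (op c • basOm 0) + (1 - (q ^ 2)⁻¹) • (op a • basOm 1)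
  bm_d_ea : d • basOm 0 = q⁻¹ • (op d • basOm 0) + (1 - (q ^ 2)⁻¹) • (op b • basOm 1)
  bm_a_ea : a • basOm 0 = q • (op a • basOm 0) + (1 - (q ^ 2)⁻¹) • (op c • basOm 2) +
    (q * (1 - (q ^ 2)⁻¹) ^ 2) • (op a • basOm 3)
  bm_b_ea : b • basOm 0 = q • (op b • basOm 0) + (1 - (q ^ 2)⁻¹) • (op d • basOm 2) +
    (q * (1 - (q ^ 2)⁻¹) ^ 2) • (op b • basOm 3)

attribute [instance] Ctx.ringA Ctx.algA Ctx.agOm Ctx.mC Ctx.mL Ctx.mR Ctx.scLR Ctx.tL Ctx.tR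

noncomputable def Ctx.mu (X : Ctx) : ℂ := 1 - (X.q ^ 2)⁻¹

/-- θ = e_a + e_d -/
noncomputable def Ctx.th (X : Ctx) : X.Om1 := X.basOm 0 + X.basOm 3

/-- d₀ f = f·θ - θ·f (left action minus right action) -/
noncomputable def Ctx.d0 (X : Ctx) (f : X.A) : X.Om1 := f • X.th - op f • X.th

/-- the quantum integer [n] = (qⁿ - q⁻ⁿ)/(q - q⁻¹) -/
noncomputable def brk (q : ℂ) (n : ℕ) : ℂ := (q ^ n - q⁻¹ ^ n) / (q - q⁻¹)

/-! Each generator x acts on a basis vector m of Ω¹ by x·m = s·(m x) + v, where v is a sum of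
terms t·(m' z) with x·m' = u·(m' x) and z x = w·(x z). Iterating as in variation of constants,
x^n·m = s^n·(m x^n) + ∑_{i<n} s^i·(x^(n-1-i)·v) x^i, and a term t·(m' z) of v contributes
t·(∑_{i<n} (s w)^i u^(n-1-i))·(m' x^(n-1) z). In every case these geometric sums are quantum
integers: ∑ q^i q^-(n-1-i) = [n] and ∑ q^(2i) = q^(n-1) [n]. -/

open Finset

section TwistedPowers

variable {k A M : Type*} [CommRing k] [Ring A] [Algebra k A] [AddCommGroup M] [Module k M]
  [Module A M] [Module Aᵐᵒᵖ M] [SMulCommClass A Aᵐᵒᵖ M]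
  [IsScalarTower k A M] [IsScalarTower k Aᵐᵒᵖ M]

lemma mul_pow_eq_smul_pow_mul {x z : A} {w : k} (h : z * x = w • (x * z)) (n : ℕ) :
    z * x ^ n = w ^ n • (x ^ n * z) := by
  induction n with
  | zero => simp
  | succ n ih =>
    rw [pow_succ, ← mul_assoc, ih, smul_mul_assoc, mul_assoc, h, mul_smul_comm, smul_smul,
      ← mul_assoc, ← pow_succ, pow_succ w]

lemma pow_smul_eq_of_smul_eq {x : A} {s : k} {m : M} (h : x • m = s • op x • m) (n : ℕ) :
    x ^ n • m = s ^ n • op (x ^ n) • m := by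
  induction n with
  | zero => simp
  | succ n ih =>
    rw [pow_succ', mul_smul, ih, smul_comm x, smul_comm x, h, smul_comm (op _) s, smul_smul,
      ← mul_smul (op _), ← op_mul, ← pow_succ, pow_succ']

lemma pow_smul_eq_op_pow_smul {x : A} {m : M} (h : x • m = op x • m) (n : ℕ) :
    x ^ n • m = op (x ^ n) • m := by
  induction n with
  | zero => simp
  | succ n ih => rw [pow_succ, mul_smul, h, smul_comm, ih, smul_smul, ← op_mul]

lemma pow_smul_eq_add_sum {x : A} {s : k} {m v : M} (h : x • m = s • op x • m + v) (n : ℕ) :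
    x ^ n • m = s ^ n • op (x ^ n) • m +
      ∑ i ∈ range n, s ^ i • op (x ^ i) • x ^ (n - 1 - i) • v := by
  induction n with
  | zero => simp
  | succ n ih =>
    rw [pow_succ, mul_smul, h, smul_add, smul_comm _ s, smul_comm _ (op x), ih,
      sum_range_succ']
    simp only [smul_add, smul_sum, smul_comm (op x) (s ^ _ : k), smul_smul, ← op_mul,
      ← pow_succ, ← pow_succ', add_tsub_cancel_right, Nat.sub_zero, pow_zero, op_one, one_smul,
      Nat.sub_sub, add_comm 1]
    abel

lemma sum_smul_op_pow_smul_twisted {x z : A} {s t u w : k} {m : M}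
    (hm : x • m = u • op x • m) (hzx : z * x = w • (x * z)) (n : ℕ) :
    ∑ i ∈ range n, s ^ i • op (x ^ i) • x ^ (n - 1 - i) • t • op z • m =
      (t * ∑ i ∈ range n, (s * w) ^ i * u ^ (n - 1 - i)) • op (x ^ (n - 1) * z) • m := by
  rw [mul_sum, sum_smul]
  refine sum_congr rfl fun i hi => ?_
  have hx : x ^ (n - 1 - i) * z * x ^ i = w ^ i • (x ^ (n - 1) * z) := by
    rw [mul_assoc, mul_pow_eq_smul_pow_mul hzx, mul_smul_comm, ← mul_assoc,
      pow_sub_mul_pow x (by simp at hi; omega)]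
  rw [smul_comm _ t, smul_comm _ (op z), pow_smul_eq_of_smul_eq hm, smul_comm (op z),
    smul_comm (op (x ^ i)), smul_comm (op (x ^ i)), smul_smul (op z), smul_smul (op (x ^ i)),
    ← op_mul, ← op_mul, hx, op_smul, smul_assoc]
  simp only [smul_smul]
  congr 1
  ring

lemma pow_smul_eq_of_smul_eq_add_twisted {x z : A} {s t u w : k} {m m' : M}
    (h : x • m = s • op x • m + t • op z • m') (hm' : x • m' = u • op x • m')
    (hzx : z * x = w • (x * z)) (n : ℕ) :
    x ^ n • m = s ^ n • op (x ^ n) • m +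
      (t * ∑ i ∈ range n, (s * w) ^ i * u ^ (n - 1 - i)) • op (x ^ (n - 1) * z) • m' := by
  rw [pow_smul_eq_add_sum h, sum_smul_op_pow_smul_twisted hm' hzx]

end TwistedPowers

lemma brk_inv (q : ℂ) (n : ℕ) : brk q⁻¹ n = brk q n := by
  rw [brk, brk, inv_inv, ← neg_sub, ← neg_sub q, neg_div_neg_eq]

lemma geom_sum₂_inv_eq_brk {q : ℂ} (hq : q - q⁻¹ ≠ 0) (n : ℕ) :
    ∑ i ∈ range n, q ^ i * q⁻¹ ^ (n - 1 - i) = brk q n := by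
  rw [brk, eq_div_iff hq, geom_sum₂_mul]

lemma geom_sum_sq_eq_brk {q : ℂ} (hq : q - q⁻¹ ≠ 0) (n : ℕ) :
    ∑ i ∈ range n, (q ^ 2) ^ i = q ^ (n - 1) * brk q n := by
  have hq0 : q ≠ 0 := by rintro rfl; simp at hq
  rw [← geom_sum₂_inv_eq_brk hq, mul_sum]
  refine sum_congr rfl fun i hi => ?_
  obtain ⟨j, hj⟩ : ∃ j, n - 1 = i + j := ⟨n - 1 - i, by simp at hi; omega⟩
  rw [hj, Nat.add_sub_cancel_left, pow_add, inv_pow, ← pow_mul]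
  field_simp
  ring

namespace Ctx

variable (X : Ctx)

lemma q_sub_inv_ne_zero : X.q - X.q⁻¹ ≠ 0 := by
  have hq0 : X.q ≠ 0 := X.hq.ne_zero (by norm_num)
  have hq2 : X.q ^ 2 ≠ 1 := X.hq.pow_ne_one_of_pos_of_lt (by norm_num) (by norm_num)
  rw [sub_ne_zero]
  contrapose! hq2
  rw [sq]
  nth_rw 2 [hq2]
  exact mul_inv_cancel₀ hq0

variable {X} {x z : X.A}

lemma pow_smul_basOm_zero_of_comm_q
    (h0 : x • X.basOm 0 = X.q • op x • X.basOm 0 + X.mu • op z • X.basOm 2 +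
      (X.q * X.mu ^ 2) • op x • X.basOm 3)
    (h2 : x • X.basOm 2 = op x • X.basOm 2) (h3 : x • X.basOm 3 = X.q⁻¹ • op x • X.basOm 3)
    (hzx : z * x = X.q • (x * z)) {n : ℕ} (hn : n ≠ 0) :
    x ^ n • X.basOm 0 = X.q ^ n • op (x ^ n) • X.basOm 0 +
      (X.q ^ (n - 1) * brk X.q n * X.mu) • op (x ^ (n - 1) * z) • X.basOm 2 +
      (X.q * X.mu ^ 2 * brk X.q n) • op (x ^ n) • X.basOm 3 := by
  have hC : ∑ i ∈ range n, (X.q * X.q) ^ i * 1 ^ (n - 1 - i) =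
      X.q ^ (n - 1) * brk X.q n := by
    simpa [sq] using geom_sum_sq_eq_brk X.q_sub_inv_ne_zero n
  have hD : ∑ i ∈ range n, (X.q * 1) ^ i * X.q⁻¹ ^ (n - 1 - i) = brk X.q n := by
    simpa using geom_sum₂_inv_eq_brk X.q_sub_inv_ne_zero n
  rw [pow_smul_eq_add_sum (by rw [h0, add_assoc])]
  simp only [smul_add, sum_add_distrib]
  -- the `basOm 3` term is the twisted case with `z = x` and `w = 1`
  rw [sum_smul_op_pow_smul_twisted (u := 1) (by rw [one_smul]; exact h2) hzx,
    sum_smul_op_pow_smul_twisted h3 (one_smul ℂ (x * x)).symm, hC, hD, pow_sub_one_mul hn,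
    mul_comm X.mu, add_assoc]

lemma pow_smul_basOm_zero_of_comm_q_inv
    (h0 : x • X.basOm 0 = X.q⁻¹ • op x • X.basOm 0 + X.mu • op z • X.basOm 1)
    (h1 : x • X.basOm 1 = op x • X.basOm 1) (hzx : z * x = X.q⁻¹ • (x * z)) (n : ℕ) :
    x ^ n • X.basOm 0 = X.q⁻¹ ^ n • op (x ^ n) • X.basOm 0 +
      (X.q⁻¹ ^ (n - 1) * brk X.q n * X.mu) • op (x ^ (n - 1) * z) • X.basOm 1 := by
  have hC : ∑ i ∈ range n, (X.q⁻¹ * X.q⁻¹) ^ i * 1 ^ (n - 1 - i) =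
      X.q⁻¹ ^ (n - 1) * brk X.q n := by
    have hq : X.q⁻¹ - X.q⁻¹⁻¹ ≠ 0 := by
      rw [inv_inv, ← neg_sub, neg_ne_zero]
      exact X.q_sub_inv_ne_zero
    simpa [sq, brk_inv] using geom_sum_sq_eq_brk hq n
  rw [pow_smul_eq_of_smul_eq_add_twisted h0 (u := 1) (by rw [one_smul]; exact h1) hzx, hC,
    mul_comm X.mu]

lemma pow_smul_basOm_one_of_comm_q
    (h1 : x • X.basOm 1 = op x • X.basOm 1 + (X.q * X.mu) • op z • X.basOm 3)
    (h3 : x • X.basOm 3 = X.q⁻¹ • op x • X.basOm 3) (hzx : z * x = X.q • (x * z)) (n : ℕ) :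
    x ^ n • X.basOm 1 = op (x ^ n) • X.basOm 1 +
      (X.q * X.mu * brk X.q n) • op (x ^ (n - 1) * z) • X.basOm 3 := by
  have hC : ∑ i ∈ range n, (1 * X.q) ^ i * X.q⁻¹ ^ (n - 1 - i) = brk X.q n := by
    simpa using geom_sum₂_inv_eq_brk X.q_sub_inv_ne_zero n
  rw [pow_smul_eq_of_smul_eq_add_twisted (s := 1) (by rw [one_smul]; exact h1) h3 hzx, hC,
    one_pow, one_smul]

lemma pow_smul_basOm_two_of_comm_q_inv
    (h2 : x • X.basOm 2 = op x • X.basOm 2 + (X.q * X.mu) • op z • X.basOm 3)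
    (h3 : x • X.basOm 3 = X.q • op x • X.basOm 3) (hzx : z * x = X.q⁻¹ • (x * z)) (n : ℕ) :
    x ^ n • X.basOm 2 = op (x ^ n) • X.basOm 2 +
      (X.q * X.mu * brk X.q n) • op (x ^ (n - 1) * z) • X.basOm 3 := by
  have hC : ∑ i ∈ range n, (1 * X.q⁻¹) ^ i * X.q ^ (n - 1 - i) = brk X.q n := by
    rw [one_mul, geom_sum₂_comm, geom_sum₂_inv_eq_brk X.q_sub_inv_ne_zero]
  rw [pow_smul_eq_of_smul_eq_add_twisted (s := 1) (by rw [one_smul]; exact h2) h3 hzx, hC,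
    one_pow, one_smul]

end Ctx

theorem stmt1 (X : Ctx) (n : ℕ) (hn : 1 ≤ n) :
    ((X.a ^ n) • X.basOm 0 = (X.q ^ n) • (op (X.a ^ n) • X.basOm 0) +
      (X.q ^ (n - 1) * brk X.q n * X.mu) • (op (X.a ^ (n - 1) * X.c) • X.basOm 2) +
      (X.q * X.mu ^ 2 * brk X.q n) • (op (X.a ^ n) • X.basOm 3)) ∧
    ((X.b ^ n) • X.basOm 0 = (X.q ^ n) • (op (X.b ^ n) • X.basOm 0) +
      (X.q ^ (n - 1) * brk X.q n * X.mu) • (op (X.b ^ (n - 1) * X.d) • X.basOm 2) +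
      (X.q * X.mu ^ 2 * brk X.q n) • (op (X.b ^ n) • X.basOm 3)) ∧
    ((X.c ^ n) • X.basOm 0 = (X.q⁻¹ ^ n) • (op (X.c ^ n) • X.basOm 0) +
      (X.q⁻¹ ^ (n - 1) * brk X.q n * X.mu) • (op (X.c ^ (n - 1) * X.a) • X.basOm 1)) ∧
    ((X.d ^ n) • X.basOm 0 = (X.q⁻¹ ^ n) • (op (X.d ^ n) • X.basOm 0) +
      (X.q⁻¹ ^ (n - 1) * brk X.q n * X.mu) • (op (X.d ^ (n - 1) * X.b) • X.basOm 1)) ∧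
    ((X.a ^ n) • X.basOm 1 = op (X.a ^ n) • X.basOm 1 +
      (X.q * X.mu * brk X.q n) • (op (X.a ^ (n - 1) * X.c) • X.basOm 3)) ∧
    ((X.b ^ n) • X.basOm 1 = op (X.b ^ n) • X.basOm 1 +
      (X.q * X.mu * brk X.q n) • (op (X.b ^ (n - 1) * X.d) • X.basOm 3)) ∧
    ((X.c ^ n) • X.basOm 1 = op (X.c ^ n) • X.basOm 1) ∧
    ((X.d ^ n) • X.basOm 1 = op (X.d ^ n) • X.basOm 1) ∧
    ((X.a ^ n) • X.basOm 2 = op (X.a ^ n) • X.basOm 2) ∧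
    ((X.b ^ n) • X.basOm 2 = op (X.b ^ n) • X.basOm 2) ∧
    ((X.c ^ n) • X.basOm 2 = op (X.c ^ n) • X.basOm 2 +
      (X.q * X.mu * brk X.q n) • (op (X.c ^ (n - 1) * X.a) • X.basOm 3)) ∧
    ((X.d ^ n) • X.basOm 2 = op (X.d ^ n) • X.basOm 2 +
      (X.q * X.mu * brk X.q n) • (op (X.d ^ (n - 1) * X.b) • X.basOm 3)) ∧
    ((X.a ^ n) • X.basOm 3 = (X.q⁻¹ ^ n) • (op (X.a ^ n) • X.basOm 3)) ∧
    ((X.b ^ n) • X.basOm 3 = (X.q⁻¹ ^ n) • (op (X.b ^ n) • X.basOm 3)) ∧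
    ((X.c ^ n) • X.basOm 3 = (X.q ^ n) • (op (X.c ^ n) • X.basOm 3)) ∧
    ((X.d ^ n) • X.basOm 3 = (X.q ^ n) • (op (X.d ^ n) • X.basOm 3)) := by
  have hq0 : X.q ≠ 0 := X.hq.ne_zero (by norm_num)
  have hac : X.a * X.c = X.q⁻¹ • (X.c * X.a) := (eq_inv_smul_iff₀ hq0).2 X.rel_ca.symm
  have hbd : X.b * X.d = X.q⁻¹ • (X.d * X.b) := (eq_inv_smul_iff₀ hq0).2 X.rel_db.symm
  have hn0 : n ≠ 0 := by omega
  exact ⟨Ctx.pow_smul_basOm_zero_of_comm_q X.bm_a_ea X.bm_a_ec X.bm_a_ed X.rel_ca hn0,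
    Ctx.pow_smul_basOm_zero_of_comm_q X.bm_b_ea X.bm_b_ec X.bm_b_ed X.rel_db hn0,
    Ctx.pow_smul_basOm_zero_of_comm_q_inv X.bm_c_ea X.bm_c_eb hac n,
    Ctx.pow_smul_basOm_zero_of_comm_q_inv X.bm_d_ea X.bm_d_eb hbd n,
    Ctx.pow_smul_basOm_one_of_comm_q X.bm_a_eb X.bm_a_ed X.rel_ca n,
    Ctx.pow_smul_basOm_one_of_comm_q X.bm_b_eb X.bm_b_ed X.rel_db n,
    pow_smul_eq_op_pow_smul X.bm_c_eb n, pow_smul_eq_op_pow_smul X.bm_d_eb n,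
    pow_smul_eq_op_pow_smul X.bm_a_ec n, pow_smul_eq_op_pow_smul X.bm_b_ec n,
    Ctx.pow_smul_basOm_two_of_comm_q_inv X.bm_c_ec X.bm_c_ed hac n,
    Ctx.pow_smul_basOm_two_of_comm_q_inv X.bm_d_ec X.bm_d_ed hbd n,
    pow_smul_eq_of_smul_eq X.bm_a_ed n, pow_smul_eq_of_smul_eq X.bm_b_ed n,
    pow_smul_eq_of_smul_eq X.bm_c_ed n, pow_smul_eq_of_smul_eq X.bm_d_ed n⟩
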